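/- arXiv:2412.09273 — 4 statements merged into one kernel-verified Lean document; each statement's English description precedes it below -/
import Mathlib

section
/- For any couple of positive integers (s, m), the sum over all multi-indices α ∈ ℕ^s with |α| = m of the product ∏_{i=1}^s 1/(1+α_i)^2 is at most 20^s/(m+1)^2. -/
open Finset

lemma basel_partial (n : ℕ) :
    ∑ j ∈ Finset.range (n+1), (1:ℝ)/((j:ℝ)+1)^2 ≤ 2 - 1/((n:ℝ)+1) := by
  induction n with
  | zero => norm_num
  | succ n ih =>
      rw [Finset.sum_range_succ]
      have hn : (0:ℝ) < (n:ℝ)+1 := by positivity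
      have h1 : (1:ℝ)/((n:ℝ)+1+1)^2 ≤ 1/((n:ℝ)+1) - 1/((n:ℝ)+1+1) := by
        rw [div_sub_div _ _ (by positivity) (by positivity), div_le_div_iff₀ (by positivity) (by positivity)]
        nlinarith
      push_cast
      push_cast at ih
      linarith

lemma basel_bound (n : ℕ) : ∑ j ∈ Finset.range n, (1:ℝ)/((j:ℝ)+1)^2 ≤ 2 := by
  cases n with
  | zero => norm_num
  | succ n =>
      have h2 : (0:ℝ) ≤ 1/((n:ℝ)+1) := by positivity
      linarith [basel_partial n]

lemma pair_bound (m : ℕ) :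
    ∑ p ∈ Finset.HasAntidiagonal.antidiagonal m, (1:ℝ)/((p.1:ℝ)+1)^2 * (1/((p.2:ℝ)+1)^2)
      ≤ 20/((m:ℝ)+1)^2 := by
  have key : ∀ p ∈ Finset.HasAntidiagonal.antidiagonal m,
      (1:ℝ)/((p.1:ℝ)+1)^2 * (1/((p.2:ℝ)+1)^2)
        ≤ 4/((m:ℝ)+1)^2 * (1/((p.1:ℝ)+1)^2 + 1/((p.2:ℝ)+1)^2) := by
    rintro ⟨a, b⟩ hp
    rw [Finset.HasAntidiagonal.mem_antidiagonal] at hp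
    have hab : (a:ℝ) + (b:ℝ) = (m:ℝ) := by exact_mod_cast congrArg Nat.cast hp
    have ha : (0:ℝ) < (a:ℝ)+1 := by positivity
    have hb : (0:ℝ) < (b:ℝ)+1 := by positivity
    have hm : (0:ℝ) < (m:ℝ)+1 := by positivity
    rcases le_total (a:ℝ) (b:ℝ) with h | h
    · -- b+1 ≥ (m+1)/2
      have hbig : (m:ℝ)+1 ≤ 2*((b:ℝ)+1) := by linarith
      have h1 : (1:ℝ)/((b:ℝ)+1)^2 ≤ 4/((m:ℝ)+1)^2 := by
        rw [div_le_div_iff₀ (by positivity) (by positivity)]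
        nlinarith
      calc (1:ℝ)/((a:ℝ)+1)^2 * (1/((b:ℝ)+1)^2)
          ≤ 4/((m:ℝ)+1)^2 * (1/((a:ℝ)+1)^2) := by
            rw [mul_comm]
            apply mul_le_mul h1 le_rfl (by positivity) (by positivity)
        _ ≤ _ := by
            have : (0:ℝ) ≤ 1/((b:ℝ)+1)^2 := by positivity
            have h4 : (0:ℝ) ≤ 4/((m:ℝ)+1)^2 := by positivity
            nlinarith
    · have hbig : (m:ℝ)+1 ≤ 2*((a:ℝ)+1) := by linarith
      have h1 : (1:ℝ)/((a:ℝ)+1)^2 ≤ 4/((m:ℝ)+1)^2 := by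
        rw [div_le_div_iff₀ (by positivity) (by positivity)]
        nlinarith
      calc (1:ℝ)/((a:ℝ)+1)^2 * (1/((b:ℝ)+1)^2)
          ≤ 4/((m:ℝ)+1)^2 * (1/((b:ℝ)+1)^2) := by
            apply mul_le_mul h1 le_rfl (by positivity) (by positivity)
        _ ≤ _ := by
            have : (0:ℝ) ≤ 1/((a:ℝ)+1)^2 := by positivity
            have h4 : (0:ℝ) ≤ 4/((m:ℝ)+1)^2 := by positivity
            nlinarith
  calc ∑ p ∈ Finset.HasAntidiagonal.antidiagonal m, (1:ℝ)/((p.1:ℝ)+1)^2 * (1/((p.2:ℝ)+1)^2)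
      ≤ ∑ p ∈ Finset.HasAntidiagonal.antidiagonal m,
          4/((m:ℝ)+1)^2 * (1/((p.1:ℝ)+1)^2 + 1/((p.2:ℝ)+1)^2) := Finset.sum_le_sum key
    _ = 4/((m:ℝ)+1)^2 * (∑ p ∈ Finset.HasAntidiagonal.antidiagonal m, (1/((p.1:ℝ)+1)^2)
          + ∑ p ∈ Finset.HasAntidiagonal.antidiagonal m, (1/((p.2:ℝ)+1)^2)) := by
        rw [← Finset.mul_sum, Finset.sum_add_distrib]
    _ ≤ 4/((m:ℝ)+1)^2 * (2 + 2) := by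
        apply mul_le_mul_of_nonneg_left _ (by positivity)
        have h1 : ∑ p ∈ Finset.HasAntidiagonal.antidiagonal m, ((1:ℝ)/((p.1:ℝ)+1)^2) ≤ 2 := by
          rw [Finset.Nat.sum_antidiagonal_eq_sum_range_succ_mk]
          exact basel_bound (m+1)
        have h2 : ∑ p ∈ Finset.HasAntidiagonal.antidiagonal m, ((1:ℝ)/((p.2:ℝ)+1)^2) ≤ 2 := by
          rw [Finset.Nat.sum_antidiagonal_eq_sum_range_succ_mk]
          have hr := Finset.sum_range_reflect (fun j => (1:ℝ)/((j:ℝ)+1)^2) (m+1)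
          simp only [Nat.add_sub_cancel] at hr
          calc ∑ k ∈ Finset.range (m+1), (1:ℝ)/((((m-k : ℕ)):ℝ)+1)^2
              = ∑ j ∈ Finset.range (m+1), (1:ℝ)/((j:ℝ)+1)^2 := hr
            _ ≤ 2 := basel_bound (m+1)
        linarith
    _ ≤ 20/((m:ℝ)+1)^2 := by
        rw [div_mul_eq_mul_div]
        apply div_le_div_of_nonneg_right (by norm_num) (by positivity)

lemma sum_antidiagonalTuple_succ {M : Type*} [AddCommMonoid M] (s m : ℕ)
    (f : (Fin (s+1) → ℕ) → M) :
    ∑ α ∈ Finset.Nat.antidiagonalTuple (s+1) m, f α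
      = ∑ p ∈ Finset.HasAntidiagonal.antidiagonal m, ∑ β ∈ Finset.Nat.antidiagonalTuple s p.2,
          f (Fin.cons p.1 β) := by
  rw [Finset.sum_sigma']
  refine Finset.sum_nbij' (fun (α : Fin (s+1) → ℕ) =>
      (⟨(α 0, ∑ i : Fin s, α i.succ), Fin.tail α⟩ : Σ _ : ℕ × ℕ, Fin s → ℕ))
    (fun x => Fin.cons x.1.1 x.2) ?_ ?_ ?_ ?_ ?_
  · intro α hα
    rw [Finset.Nat.mem_antidiagonalTuple] at hα
    rw [Finset.mem_sigma, Finset.HasAntidiagonal.mem_antidiagonal]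
    constructor
    · rw [← hα, Fin.sum_univ_succ]
    · rw [Finset.Nat.mem_antidiagonalTuple]
      rfl
  · rintro ⟨⟨a, b⟩, β⟩ hx
    rw [Finset.mem_sigma, Finset.HasAntidiagonal.mem_antidiagonal] at hx
    rw [Finset.Nat.mem_antidiagonalTuple] at hx ⊢
    rw [Fin.sum_cons, hx.2]
    exact hx.1
  · intro α hα
    simp [Fin.cons_self_tail]
  · rintro ⟨⟨a, b⟩, β⟩ hx
    rw [Finset.mem_sigma, Finset.Nat.mem_antidiagonalTuple] at hx
    simp [Fin.tail_cons, hx.2]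
  · intro α hα
    simp [Fin.cons_self_tail]

lemma chemin_aux (s m : ℕ) :
    ∑ α ∈ Finset.Nat.antidiagonalTuple s m, ∏ i : Fin s, (1 : ℝ) / (1 + (α i : ℝ)) ^ 2
      ≤ 20 ^ s / ((m : ℝ) + 1) ^ 2 := by
  induction s generalizing m with
  | zero =>
      rcases Nat.eq_zero_or_pos m with rfl | hm
      · simp
      · obtain ⟨k, rfl⟩ := Nat.exists_eq_succ_of_ne_zero hm.ne'
        rw [Finset.Nat.antidiagonalTuple_zero_succ]
        simp
        positivity
  | succ s ih =>
      rw [sum_antidiagonalTuple_succ]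
      have step : ∀ p ∈ Finset.HasAntidiagonal.antidiagonal m,
          ∑ β ∈ Finset.Nat.antidiagonalTuple s p.2,
            ∏ i : Fin (s+1), (1:ℝ) / (1 + ((Fin.cons p.1 β : Fin (s+1) → ℕ) i : ℝ)) ^ 2
          ≤ 20 ^ s * ((1:ℝ)/((p.1:ℝ)+1)^2 * (1/((p.2:ℝ)+1)^2)) := by
        rintro ⟨a, b⟩ hp
        have : ∀ β : Fin s → ℕ,
            ∏ i : Fin (s+1), (1:ℝ) / (1 + ((Fin.cons a β : Fin (s+1) → ℕ) i : ℝ)) ^ 2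
            = (1:ℝ)/(1+(a:ℝ))^2 * ∏ i : Fin s, (1:ℝ)/(1+(β i : ℝ))^2 := by
          intro β
          rw [Fin.prod_univ_succ]
          simp
        simp only [this]
        rw [← Finset.mul_sum]
        have hb := ih b
        calc (1:ℝ)/(1+(a:ℝ))^2 * ∑ β ∈ Finset.Nat.antidiagonalTuple s b,
                ∏ i : Fin s, (1:ℝ)/(1+(β i : ℝ))^2
            ≤ (1:ℝ)/(1+(a:ℝ))^2 * (20 ^ s / ((b:ℝ)+1)^2) := by
              apply mul_le_mul_of_nonneg_left hb (by positivity)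
          _ = 20 ^ s * ((1:ℝ)/((a:ℝ)+1)^2 * (1/((b:ℝ)+1)^2)) := by ring
      calc _ ≤ ∑ p ∈ Finset.HasAntidiagonal.antidiagonal m,
                (20:ℝ) ^ s * ((1:ℝ)/((p.1:ℝ)+1)^2 * (1/((p.2:ℝ)+1)^2)) :=
              Finset.sum_le_sum step
        _ = 20 ^ s * ∑ p ∈ Finset.HasAntidiagonal.antidiagonal m,
                ((1:ℝ)/((p.1:ℝ)+1)^2 * (1/((p.2:ℝ)+1)^2)) := by rw [Finset.mul_sum]
        _ ≤ 20 ^ s * (20/((m:ℝ)+1)^2) := by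
              apply mul_le_mul_of_nonneg_left (pair_bound m) (by positivity)
        _ = 20 ^ (s+1) / ((m:ℝ)+1)^2 := by ring

/-- Chemin's combinatorial lemma: for positive integers `s, m`,
`∑_{α ∈ ℕ^s, |α| = m} ∏_{i=1}^s 1/(1+α_i)^2 ≤ 20^s/(m+1)^2`. -/
theorem chemin_combinatorial_lemma (s m : ℕ) (hs : 0 < s) (hm : 0 < m) :
    ∑ α ∈ Finset.Nat.antidiagonalTuple s m, ∏ i : Fin s, (1 : ℝ) / (1 + (α i : ℝ)) ^ 2
      ≤ 20 ^ s / ((m : ℝ) + 1) ^ 2 :=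
  chemin_aux s m
end

section
/- For any smooth vector fields u and ψ on an open set Ω ⊆ ℝ^d with u divergence-free, defining curl ψ as the antisymmetric part ∇ψ - (∇ψ)^⊤ of the Jacobian and D = ∂_t + u·∇, one has curl(Dψ) - D(curl ψ) = as{(∇ψ)·(∇u)}, where as{A} = A - A^⊤. -/
open scoped BigOperators
open ContinuousLinearMap

/-- spatial partial derivative `∂_j f` of a scalar function on `ℝ^d`. -/
noncomputable def pd {d : ℕ} (j : Fin d) (f : (Fin d → ℝ) → ℝ) (x : Fin d → ℝ) : ℝ :=
  fderiv ℝ f x (Pi.single j 1)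

/-- material derivative `D = ∂_t + u·∇` acting on a scalar time-dependent function. -/
noncomputable def matD {d : ℕ} (u : ℝ → (Fin d → ℝ) → Fin d → ℝ)
    (f : ℝ → (Fin d → ℝ) → ℝ) (t : ℝ) (x : Fin d → ℝ) : ℝ :=
  deriv (fun s => f s x) t + ∑ j, u t x j * pd j (f t) x

section helpers
variable {d : ℕ} {Φ : ℝ × (Fin d → ℝ) → ℝ} {s t : ℝ} {y x : Fin d → ℝ}

lemma slice_hasFDerivAt (h : DifferentiableAt ℝ Φ (s, y)) :
    HasFDerivAt (fun z => Φ (s, z)) ((fderiv ℝ Φ (s, y)).comp (inr ℝ ℝ (Fin d → ℝ))) y :=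
  h.hasFDerivAt.comp y (hasFDerivAt_prodMk_right s y)

lemma pd_slice (h : DifferentiableAt ℝ Φ (s, y)) (l : Fin d) :
    pd l (fun z => Φ (s, z)) y = fderiv ℝ Φ (s, y) (0, Pi.single l 1) := by
  rw [pd, (slice_hasFDerivAt h).fderiv]; simp

lemma tslice_hasDerivAt (h : DifferentiableAt ℝ Φ (s, y)) :
    HasDerivAt (fun r => Φ (r, y)) (fderiv ℝ Φ (s, y) (1, 0)) s := by
  have := h.hasFDerivAt.comp_hasDerivAt s ((hasFDerivAt_prodMk_left s y).hasDerivAt)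
  exact this

lemma fderiv_slice_hasFDerivAt (h : ContDiffAt ℝ (⊤ : ℕ∞) Φ (t, x)) (v : ℝ × (Fin d → ℝ)) :
    HasFDerivAt (fun y => fderiv ℝ Φ (t, y) v)
      ((apply ℝ ℝ v).comp ((fderiv ℝ (fderiv ℝ Φ) (t, x)).comp (inr ℝ ℝ (Fin d → ℝ)))) x := by
  have hB : HasFDerivAt (fderiv ℝ Φ) (fderiv ℝ (fderiv ℝ Φ) (t, x)) (t, x) :=
    ((h.fderiv_right (m := 1) (WithTop.coe_le_coe.2 le_top)).differentiableAt one_ne_zero).hasFDerivAt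
  exact ((apply ℝ ℝ v).hasFDerivAt).comp x (hB.comp x (hasFDerivAt_prodMk_right t x))

lemma fderiv_tslice_hasDerivAt (h : ContDiffAt ℝ (⊤ : ℕ∞) Φ (t, x)) (v : ℝ × (Fin d → ℝ)) :
    HasDerivAt (fun s => fderiv ℝ Φ (s, x) v)
      (fderiv ℝ (fderiv ℝ Φ) (t, x) (1, 0) v) t := by
  have hB : HasFDerivAt (fderiv ℝ Φ) (fderiv ℝ (fderiv ℝ Φ) (t, x)) (t, x) :=
    ((h.fderiv_right (m := 1) (WithTop.coe_le_coe.2 le_top)).differentiableAt one_ne_zero).hasFDerivAt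
  have h1 := hB.comp_hasDerivAt t ((hasFDerivAt_prodMk_left t x).hasDerivAt)
  have h2 := ((apply ℝ ℝ v).hasFDerivAt).comp_hasDerivAt t h1
  exact h2

end helpers

/-- Commutator rule (3.4): for smooth vector fields `u, ψ` with `u` divergence-free,
defining `curl ψ` as the antisymmetric part `∇ψ - (∇ψ)^⊤` of the Jacobian,
`curl(Dψ) - D(curl ψ) = as{(∇ψ)·(∇u)}` componentwise. -/
theorem commutator_curl_matD {d : ℕ} (Ω : Set (Fin d → ℝ)) (hΩ : IsOpen Ω)
    (u ψ : ℝ → (Fin d → ℝ) → Fin d → ℝ)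
    (hu : ContDiffOn ℝ (⊤ : ℕ∞) (fun p : ℝ × (Fin d → ℝ) => u p.1 p.2) (Set.univ ×ˢ Ω))
    (hψ : ContDiffOn ℝ (⊤ : ℕ∞) (fun p : ℝ × (Fin d → ℝ) => ψ p.1 p.2) (Set.univ ×ˢ Ω))
    (hdiv : ∀ (t : ℝ), ∀ x ∈ Ω, (∑ i, pd i (fun y => u t y i) x) = 0) :
    ∀ (t : ℝ), ∀ x ∈ Ω, ∀ i j : Fin d,
      (pd j (fun y => matD u (fun s z => ψ s z i) t y) x
          - pd i (fun y => matD u (fun s z => ψ s z j) t y) x)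
        - matD u (fun s z =>
            pd j (fun y => ψ s y i) z - pd i (fun y => ψ s y j) z) t x
      = (∑ l, pd l (fun y => ψ t y i) x * pd j (fun y => u t y l) x)
        - ∑ l, pd l (fun y => ψ t y j) x * pd i (fun y => u t y l) x := by
  intro t x hx i j
  have hS : IsOpen (Set.univ ×ˢ Ω : Set (ℝ × (Fin d → ℝ))) := isOpen_univ.prod hΩ
  -- componentwise smoothness at points of the open set
  have hΦ : ∀ (k : Fin d) (s : ℝ) (y : Fin d → ℝ), y ∈ Ω →
      ContDiffAt ℝ (⊤ : ℕ∞) (fun p : ℝ × (Fin d → ℝ) => ψ p.1 p.2 k) (s, y) := fun k s y hy =>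
    (contDiffAt_pi.1 (hψ.contDiffAt (hS.mem_nhds ⟨trivial, hy⟩))) k
  have hU : ∀ (l : Fin d) (s : ℝ) (y : Fin d → ℝ), y ∈ Ω →
      ContDiffAt ℝ (⊤ : ℕ∞) (fun p : ℝ × (Fin d → ℝ) => u p.1 p.2 l) (s, y) := fun l s y hy =>
    (contDiffAt_pi.1 (hu.contDiffAt (hS.mem_nhds ⟨trivial, hy⟩))) l
  -- notation
  set e0 : ℝ × (Fin d → ℝ) := ((1 : ℝ), (0 : Fin d → ℝ)) with he0
  -- key 1 : pd of matD
  have key1 : ∀ k m : Fin d,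
      pd m (fun y => matD u (fun s z => ψ s z k) t y) x
        = fderiv ℝ (fderiv ℝ (fun p : ℝ × (Fin d → ℝ) => ψ p.1 p.2 k)) (t, x)
            ((0 : ℝ), Pi.single m (1 : ℝ)) e0
          + ∑ l, (u t x l *
              fderiv ℝ (fderiv ℝ (fun p : ℝ × (Fin d → ℝ) => ψ p.1 p.2 k)) (t, x)
                ((0 : ℝ), Pi.single m (1 : ℝ)) ((0 : ℝ), Pi.single l (1 : ℝ))
            + fderiv ℝ (fun p : ℝ × (Fin d → ℝ) => ψ p.1 p.2 k) (t, x)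
                ((0 : ℝ), Pi.single l (1 : ℝ)) *
              fderiv ℝ (fun p : ℝ × (Fin d → ℝ) => u p.1 p.2 l) (t, x)
                ((0 : ℝ), Pi.single m (1 : ℝ))) := by
    intro k m
    have hE : (fun y => matD u (fun s z => ψ s z k) t y) =ᶠ[nhds x]
        (fun y => fderiv ℝ (fun p : ℝ × (Fin d → ℝ) => ψ p.1 p.2 k) (t, y) e0
          + ∑ l, (fun p : ℝ × (Fin d → ℝ) => u p.1 p.2 l) (t, y) *
              fderiv ℝ (fun p : ℝ × (Fin d → ℝ) => ψ p.1 p.2 k) (t, y)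
                ((0 : ℝ), Pi.single l (1 : ℝ))) := by
      filter_upwards [hΩ.mem_nhds hx] with y hy
      unfold matD
      congr 1
      · exact (tslice_hasDerivAt ((hΦ k t y hy).differentiableAt (by simp))).deriv
      · exact Finset.sum_congr rfl fun l _ => by
          rw [pd_slice ((hΦ k t y hy).differentiableAt (by simp)) l]
    have hG : HasFDerivAt
        (fun y => fderiv ℝ (fun p : ℝ × (Fin d → ℝ) => ψ p.1 p.2 k) (t, y) e0
          + ∑ l, (fun p : ℝ × (Fin d → ℝ) => u p.1 p.2 l) (t, y) *
              fderiv ℝ (fun p : ℝ × (Fin d → ℝ) => ψ p.1 p.2 k) (t, y)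
                ((0 : ℝ), Pi.single l (1 : ℝ)))
        ((apply ℝ ℝ e0).comp
            ((fderiv ℝ (fderiv ℝ (fun p : ℝ × (Fin d → ℝ) => ψ p.1 p.2 k)) (t, x)).comp
              (inr ℝ ℝ (Fin d → ℝ)))
          + ∑ l, ((fun p : ℝ × (Fin d → ℝ) => u p.1 p.2 l) (t, x) •
              ((apply ℝ ℝ ((0 : ℝ), Pi.single l (1 : ℝ))).comp
                ((fderiv ℝ (fderiv ℝ (fun p : ℝ × (Fin d → ℝ) => ψ p.1 p.2 k)) (t, x)).comp
                  (inr ℝ ℝ (Fin d → ℝ))))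
            + fderiv ℝ (fun p : ℝ × (Fin d → ℝ) => ψ p.1 p.2 k) (t, x)
                ((0 : ℝ), Pi.single l (1 : ℝ)) •
              ((fderiv ℝ (fun p : ℝ × (Fin d → ℝ) => u p.1 p.2 l) (t, x)).comp
                (inr ℝ ℝ (Fin d → ℝ))))) x :=
      (fderiv_slice_hasFDerivAt (hΦ k t x hx) e0).fun_add
        (HasFDerivAt.fun_sum fun l _ =>
          (slice_hasFDerivAt ((hU l t x hx).differentiableAt (by simp))).fun_mul
            (fderiv_slice_hasFDerivAt (hΦ k t x hx) ((0 : ℝ), Pi.single l (1 : ℝ))))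
    rw [pd, hE.fderiv_eq, hG.fderiv]
    simp [ContinuousLinearMap.add_apply, ContinuousLinearMap.sum_apply,
      ContinuousLinearMap.comp_apply, ContinuousLinearMap.apply_apply,
      ContinuousLinearMap.smul_apply, smul_eq_mul]
  -- symmetry of second derivatives
  have hsym : ∀ k : Fin d, ∀ v w : ℝ × (Fin d → ℝ),
      fderiv ℝ (fderiv ℝ (fun p : ℝ × (Fin d → ℝ) => ψ p.1 p.2 k)) (t, x) v w
        = fderiv ℝ (fderiv ℝ (fun p : ℝ × (Fin d → ℝ) => ψ p.1 p.2 k)) (t, x) w v :=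
    fun k => ((hΦ k t x hx).isSymmSndFDerivAt (by rw [minSmoothness_of_isRCLikeNormedField]; exact WithTop.coe_le_coe.2 le_top))
  -- key 3 : matD of the curl component
  have key3 : matD u (fun s z =>
        pd j (fun y => ψ s y i) z - pd i (fun y => ψ s y j) z) t x
      = (fderiv ℝ (fderiv ℝ (fun p : ℝ × (Fin d → ℝ) => ψ p.1 p.2 i)) (t, x)
            ((0 : ℝ), Pi.single j (1 : ℝ)) e0
          - fderiv ℝ (fderiv ℝ (fun p : ℝ × (Fin d → ℝ) => ψ p.1 p.2 j)) (t, x)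
            ((0 : ℝ), Pi.single i (1 : ℝ)) e0)
        + ∑ l, u t x l *
            (fderiv ℝ (fderiv ℝ (fun p : ℝ × (Fin d → ℝ) => ψ p.1 p.2 i)) (t, x)
                ((0 : ℝ), Pi.single j (1 : ℝ)) ((0 : ℝ), Pi.single l (1 : ℝ))
              - fderiv ℝ (fderiv ℝ (fun p : ℝ × (Fin d → ℝ) => ψ p.1 p.2 j)) (t, x)
                ((0 : ℝ), Pi.single i (1 : ℝ)) ((0 : ℝ), Pi.single l (1 : ℝ))) := by
    unfold matD
    congr 1
    · -- time derivative part
      have hfun : (fun s => pd j (fun y => ψ s y i) x - pd i (fun y => ψ s y j) x)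
          = fun s => fderiv ℝ (fun p : ℝ × (Fin d → ℝ) => ψ p.1 p.2 i) (s, x)
              ((0 : ℝ), Pi.single j (1 : ℝ))
            - fderiv ℝ (fun p : ℝ × (Fin d → ℝ) => ψ p.1 p.2 j) (s, x)
              ((0 : ℝ), Pi.single i (1 : ℝ)) := funext fun s => by
        rw [pd_slice ((hΦ i s x hx).differentiableAt (by simp)) j,
          pd_slice ((hΦ j s x hx).differentiableAt (by simp)) i]
      rw [hfun,
        ((fderiv_tslice_hasDerivAt (hΦ i t x hx) ((0 : ℝ), Pi.single j (1 : ℝ))).fun_sub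
          (fderiv_tslice_hasDerivAt (hΦ j t x hx) ((0 : ℝ), Pi.single i (1 : ℝ)))).deriv,
        hsym i e0, hsym j e0]
    · -- spatial part
      refine Finset.sum_congr rfl fun l _ => ?_
      have hE : (fun z => pd j (fun y => ψ t y i) z - pd i (fun y => ψ t y j) z)
          =ᶠ[nhds x]
          (fun z => fderiv ℝ (fun p : ℝ × (Fin d → ℝ) => ψ p.1 p.2 i) (t, z)
              ((0 : ℝ), Pi.single j (1 : ℝ))
            - fderiv ℝ (fun p : ℝ × (Fin d → ℝ) => ψ p.1 p.2 j) (t, z)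
              ((0 : ℝ), Pi.single i (1 : ℝ))) := by
        filter_upwards [hΩ.mem_nhds hx] with z hz
        rw [pd_slice ((hΦ i t z hz).differentiableAt (by simp)) j,
          pd_slice ((hΦ j t z hz).differentiableAt (by simp)) i]
      have hG := (fderiv_slice_hasFDerivAt (hΦ i t x hx)
          ((0 : ℝ), Pi.single j (1 : ℝ))).fun_sub
        (fderiv_slice_hasFDerivAt (hΦ j t x hx) ((0 : ℝ), Pi.single i (1 : ℝ)))
      rw [pd, hE.fderiv_eq, hG.fderiv]
      simp [hsym i ((0 : ℝ), Pi.single l (1 : ℝ)) ((0 : ℝ), Pi.single j (1 : ℝ)),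
        hsym j ((0 : ℝ), Pi.single l (1 : ℝ)) ((0 : ℝ), Pi.single i (1 : ℝ))]
  -- rewrite RHS first derivatives
  have rψ : ∀ (k l : Fin d), pd l (fun y => ψ t y k) x
      = fderiv ℝ (fun p : ℝ × (Fin d → ℝ) => ψ p.1 p.2 k) (t, x)
          ((0 : ℝ), Pi.single l (1 : ℝ)) := fun k l =>
    pd_slice ((hΦ k t x hx).differentiableAt (by simp)) l
  have ru : ∀ (l m : Fin d), pd m (fun y => u t y l) x
      = fderiv ℝ (fun p : ℝ × (Fin d → ℝ) => u p.1 p.2 l) (t, x)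
          ((0 : ℝ), Pi.single m (1 : ℝ)) := fun l m =>
    pd_slice ((hU l t x hx).differentiableAt (by simp)) m
  rw [key1 i j, key1 j i, key3, hsym i ((0 : ℝ), Pi.single j (1 : ℝ)) e0,
    hsym j ((0 : ℝ), Pi.single i (1 : ℝ)) e0]
  simp only [rψ, ru, mul_sub, Finset.sum_add_distrib, Finset.sum_sub_distrib]
  ring
end

section
/- Under the inductive assumption ‖D^{α_i} u‖ ≤ C·α_i!·(CL)^{α_i}·M^{α_i+1}/(α_i+1)² for all components of α, one has Σ_{s=2}^{k+1} Σ_{α∈ℕ^s, |α|=k+1-s} (k!/α!) ∏_{i=1}^s ‖D^{α_i}u‖ ≤ C·(k!(CL)^k M^{k+1}/(k+1)²)·Σ_{s=2}^{k+1} L^{1-s}(k+1)²20^s/(k+2-s)², provided C ≥ 1 and M, L > 0. -/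
open scoped BigOperators

private lemma basel_aux (n : ℕ) :
    ∑ i ∈ Finset.range (n + 1), (1 : ℝ) / ((i : ℝ) + 1) ^ 2 ≤ 2 - 1 / ((n : ℝ) + 1) := by
  induction n with
  | zero => norm_num
  | succ n ih =>
    rw [Finset.sum_range_succ]
    have hn : (0 : ℝ) < (n : ℝ) + 1 := by positivity
    have hn2 : (0 : ℝ) < (n : ℝ) + 2 := by positivity
    push_cast
    have key : (1 : ℝ) / ((n : ℝ) + 1 + 1) ^ 2 ≤ 1 / ((n : ℝ) + 1) - 1 / ((n : ℝ) + 1 + 1) := by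
      rw [div_sub_div _ _ (ne_of_gt hn) (by positivity),
        div_le_div_iff₀ (by positivity) (by positivity)]
      nlinarith
    linarith

private lemma basel (n : ℕ) :
    ∑ i ∈ Finset.range n, (1 : ℝ) / ((i : ℝ) + 1) ^ 2 ≤ 2 := by
  cases n with
  | zero => norm_num
  | succ n =>
    have h1 : (0:ℝ) < (n : ℝ) + 1 := by positivity
    have h2 : (0:ℝ) ≤ 1 / ((n : ℝ) + 1) := by positivity
    linarith [basel_aux n]

private lemma conv_bound (n : ℕ) :
    ∑ p ∈ Finset.HasAntidiagonal.antidiagonal n,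
      (1 : ℝ) / (((p.1 : ℝ) + 1) ^ 2 * ((p.2 : ℝ) + 1) ^ 2) ≤ 20 / ((n : ℝ) + 1) ^ 2 := by
  have step1 : ∑ p ∈ Finset.HasAntidiagonal.antidiagonal n,
      (1 : ℝ) / (((p.1 : ℝ) + 1) ^ 2 * ((p.2 : ℝ) + 1) ^ 2)
      ≤ ∑ p ∈ Finset.HasAntidiagonal.antidiagonal n,
        2 / (((n : ℝ) + 2) ^ 2) * (1 / ((p.1 : ℝ) + 1) ^ 2 + 1 / ((p.2 : ℝ) + 1) ^ 2) := by
    apply Finset.sum_le_sum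
    intro p hp
    have hsum : p.1 + p.2 = n := Finset.HasAntidiagonal.mem_antidiagonal.mp hp
    set x : ℝ := (p.1 : ℝ) + 1 with hx
    set y : ℝ := (p.2 : ℝ) + 1 with hy
    have hx1 : (1 : ℝ) ≤ x := by
      rw [hx]; have := Nat.cast_nonneg (α := ℝ) p.1; linarith
    have hy1 : (1 : ℝ) ≤ y := by
      rw [hy]; have := Nat.cast_nonneg (α := ℝ) p.2; linarith
    have hxy : x + y = (n : ℝ) + 2 := by
      rw [hx, hy, ← hsum]; push_cast; ring
    have hx0 : (0 : ℝ) < x := by linarith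
    have hy0 : (0 : ℝ) < y := by linarith
    rw [← hxy]
    have h1 : (1 : ℝ) / (x * y) = (1 / (x + y)) * (1 / x + 1 / y) := by
      have hxy0 : (0:ℝ) < x + y := by linarith
      field_simp
      ring
    have h2 : (1 : ℝ) / (x ^ 2 * y ^ 2) = (1 / (x + y)) ^ 2 * (1 / x + 1 / y) ^ 2 := by
      have : (1 : ℝ) / (x ^ 2 * y ^ 2) = ((1 : ℝ) / (x * y)) ^ 2 := by
        rw [div_pow]; ring_nf
      rw [this, h1]; ring
    rw [h2]
    have h3 : (1 / x + 1 / y) ^ 2 ≤ 2 * ((1 / x) ^ 2 + (1 / y) ^ 2) := by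
      nlinarith [sq_nonneg (1 / x - 1 / y)]
    have h4 : (0 : ℝ) < x + y := by linarith
    calc (1 / (x + y)) ^ 2 * (1 / x + 1 / y) ^ 2
        ≤ (1 / (x + y)) ^ 2 * (2 * ((1 / x) ^ 2 + (1 / y) ^ 2)) := by
          apply mul_le_mul_of_nonneg_left h3 (by positivity)
      _ = 2 / (x + y) ^ 2 * (1 / x ^ 2 + 1 / y ^ 2) := by
          rw [div_pow]; field_simp; try ring
  have step2 : ∑ p ∈ Finset.HasAntidiagonal.antidiagonal n,
      2 / (((n : ℝ) + 2) ^ 2) * (1 / ((p.1 : ℝ) + 1) ^ 2 + 1 / ((p.2 : ℝ) + 1) ^ 2)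
      ≤ 2 / (((n : ℝ) + 2) ^ 2) * 4 := by
    rw [← Finset.mul_sum]
    apply mul_le_mul_of_nonneg_left _ (by positivity)
    rw [Finset.sum_add_distrib]
    have hA : ∑ p ∈ Finset.HasAntidiagonal.antidiagonal n, (1 : ℝ) / ((p.1 : ℝ) + 1) ^ 2 ≤ 2 := by
      rw [Finset.Nat.sum_antidiagonal_eq_sum_range_succ_mk]
      exact basel (n + 1)
    have hB : ∑ p ∈ Finset.HasAntidiagonal.antidiagonal n, (1 : ℝ) / ((p.2 : ℝ) + 1) ^ 2 ≤ 2 := by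
      rw [Finset.Nat.sum_antidiagonal_eq_sum_range_succ_mk]
      have hre := Finset.sum_range_reflect (fun j => (1 : ℝ) / ((j : ℝ) + 1) ^ 2) (n + 1)
      simp only [Nat.succ_sub_one] at hre
      calc ∑ i ∈ Finset.range (n + 1), (1 : ℝ) / (((n - i : ℕ) : ℝ) + 1) ^ 2
          = ∑ i ∈ Finset.range (n + 1), (1 : ℝ) / ((i : ℝ) + 1) ^ 2 := hre
        _ ≤ 2 := basel (n + 1)
    linarith
  have step3 : 2 / (((n : ℝ) + 2) ^ 2) * 4 ≤ 20 / ((n : ℝ) + 1) ^ 2 := by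
    rw [div_mul_eq_mul_div, div_le_div_iff₀ (by positivity) (by positivity)]
    nlinarith [Nat.cast_nonneg (α := ℝ) n]
  linarith

private lemma chemin {ι : Type*} [DecidableEq ι] (t : Finset ι) (n : ℕ) :
    ∑ f ∈ t.piAntidiag n, ∏ i ∈ t, (1 : ℝ) / ((f i : ℝ) + 1) ^ 2
      ≤ 20 ^ t.card / ((n : ℝ) + 1) ^ 2 := by
  induction t using Finset.cons_induction generalizing n with
  | empty =>
    rw [Finset.piAntidiag_empty]
    split_ifs with h
    · subst h; simp
    · simp only [Finset.sum_empty]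
      positivity
  | cons i t hi ih =>
    rw [Finset.piAntidiag_cons hi, Finset.sum_disjiUnion]
    have key : ∀ p ∈ Finset.HasAntidiagonal.antidiagonal n,
        (∑ f ∈ (t.piAntidiag p.2).map
            (addRightEmbedding fun j => if j = i then p.1 else 0),
          ∏ j ∈ Finset.cons i t hi, (1 : ℝ) / ((f j : ℝ) + 1) ^ 2)
        ≤ 20 ^ t.card * (1 / (((p.1 : ℝ) + 1) ^ 2 * ((p.2 : ℝ) + 1) ^ 2)) := by
      intro p hp
      rw [Finset.sum_map]
      have inner_eq : ∀ g ∈ t.piAntidiag p.2,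
          ∏ j ∈ Finset.cons i t hi,
            (1 : ℝ) / ((((addRightEmbedding fun j => if j = i then p.1 else 0) g) j : ℝ) + 1) ^ 2
          = (1 / ((p.1 : ℝ) + 1) ^ 2) * ∏ j ∈ t, (1 : ℝ) / ((g j : ℝ) + 1) ^ 2 := by
        intro g hg
        obtain ⟨-, hgsupp⟩ := Finset.mem_piAntidiag.mp hg
        have hgi : g i = 0 := by
          by_contra h
          exact hi (hgsupp i h)
        rw [Finset.prod_cons]
        congr 1
        · simp [addRightEmbedding_apply, hgi]
        · apply Finset.prod_congr rfl
          intro j hj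
          have hji : j ≠ i := fun h => hi (h ▸ hj)
          simp [addRightEmbedding_apply, hji]
      rw [Finset.sum_congr rfl inner_eq, ← Finset.mul_sum]
      have h2 := ih p.2
      have hp1 : (0:ℝ) < ((p.1 : ℝ) + 1) ^ 2 := by positivity
      calc (1 / ((p.1 : ℝ) + 1) ^ 2) * ∑ g ∈ t.piAntidiag p.2, ∏ j ∈ t, (1 : ℝ) / ((g j : ℝ) + 1) ^ 2
          ≤ (1 / ((p.1 : ℝ) + 1) ^ 2) * (20 ^ t.card / ((p.2 : ℝ) + 1) ^ 2) := by
            apply mul_le_mul_of_nonneg_left h2 (by positivity)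
        _ = 20 ^ t.card * (1 / (((p.1 : ℝ) + 1) ^ 2 * ((p.2 : ℝ) + 1) ^ 2)) := by
            field_simp; try ring
    calc ∑ p ∈ Finset.HasAntidiagonal.antidiagonal n,
          ∑ f ∈ (t.piAntidiag p.2).map (addRightEmbedding fun j => if j = i then p.1 else 0),
            ∏ j ∈ Finset.cons i t hi, (1 : ℝ) / ((f j : ℝ) + 1) ^ 2
        ≤ ∑ p ∈ Finset.HasAntidiagonal.antidiagonal n,
            20 ^ t.card * (1 / (((p.1 : ℝ) + 1) ^ 2 * ((p.2 : ℝ) + 1) ^ 2)) :=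
          Finset.sum_le_sum key
      _ = 20 ^ t.card * ∑ p ∈ Finset.HasAntidiagonal.antidiagonal n,
            (1 : ℝ) / (((p.1 : ℝ) + 1) ^ 2 * ((p.2 : ℝ) + 1) ^ 2) := by
          rw [Finset.mul_sum]
      _ ≤ 20 ^ t.card * (20 / ((n : ℝ) + 1) ^ 2) := by
          apply mul_le_mul_of_nonneg_left (conv_bound n) (by positivity)
      _ = 20 ^ (Finset.cons i t hi).card / ((n : ℝ) + 1) ^ 2 := by
          rw [Finset.card_cons, pow_succ]
          ring

/-- Abstract inequality behind the divergence estimate (ineq_div): under the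
inductive bound `a_j ≤ C·j!(CL)^j M^{j+1}/(j+1)²`, one has
`Σ_{s=2}^{k+1} Σ_{|α|=k+1-s} (k!/α!) Π a_{α_i}
  ≤ C·(k!(CL)^k M^{k+1}/(k+1)²)·Σ_{s=2}^{k+1} L^{1-s}(k+1)²20^s/(k+2-s)²`. -/
theorem divergence_estimate_abstract (k : ℕ) (hk : 1 ≤ k)
    (C L M : ℝ) (hC : 1 ≤ C) (hL : 0 < L) (hM : 0 < M)
    (a : ℕ → ℝ) (ha_nonneg : ∀ j, 0 ≤ a j)
    (ha : ∀ j : ℕ, a j ≤ C * (Nat.factorial j : ℝ) * (C * L) ^ j * M ^ (j + 1)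
        / ((j : ℝ) + 1) ^ 2) :
    (∑ s ∈ Finset.Icc 2 (k + 1),
      ∑ α ∈ Finset.Nat.antidiagonalTuple s (k + 1 - s),
        ((Nat.factorial k : ℝ) / ∏ i, ((Nat.factorial (α i) : ℕ) : ℝ))
          * ∏ i, a (α i))
    ≤ C * ((Nat.factorial k : ℝ) * (C * L) ^ k * M ^ (k + 1) / ((k : ℝ) + 1) ^ 2)
        * ∑ s ∈ Finset.Icc 2 (k + 1),
            L ^ (1 - (s : ℤ)) * ((k : ℝ) + 1) ^ 2 * 20 ^ s
              / ((k + 2 - s : ℕ) : ℝ) ^ 2 := by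
  have hC0 : (0:ℝ) < C := lt_of_lt_of_le one_pos hC
  rw [Finset.mul_sum]
  apply Finset.sum_le_sum
  intro s hs
  obtain ⟨hs2, hsk⟩ := Finset.mem_Icc.mp hs
  set m := k + 1 - s with hm
  have hms : m + s = k + 1 := by omega
  -- per-tuple bound
  have per_tuple : ∀ α ∈ Finset.Nat.antidiagonalTuple s m,
      ((Nat.factorial k : ℝ) / ∏ i, ((Nat.factorial (α i) : ℕ) : ℝ)) * ∏ i, a (α i)
      ≤ ((Nat.factorial k : ℝ) * C ^ (k + 1) * L ^ m * M ^ (k + 1))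
          * ∏ i, (1 : ℝ) / ((α i : ℝ) + 1) ^ 2 := by
    intro α hα
    have hαsum : ∑ i, α i = m := Finset.Nat.mem_antidiagonalTuple.mp hα
    have hP : (0:ℝ) < ∏ i, ((Nat.factorial (α i) : ℕ) : ℝ) := by
      apply Finset.prod_pos
      intro i _
      exact_mod_cast Nat.factorial_pos (α i)
    have h1 : ∏ i, a (α i) ≤ ∏ i,
        (C * (Nat.factorial (α i) : ℝ) * (C * L) ^ (α i) * M ^ (α i + 1) / ((α i : ℝ) + 1) ^ 2) :=
      Finset.prod_le_prod (fun i _ => ha_nonneg _) (fun i _ => ha _)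
    have h2 : ((Nat.factorial k : ℝ) / ∏ i, ((Nat.factorial (α i) : ℕ) : ℝ)) * ∏ i, a (α i)
        ≤ ((Nat.factorial k : ℝ) / ∏ i, ((Nat.factorial (α i) : ℕ) : ℝ)) * ∏ i,
          (C * (Nat.factorial (α i) : ℝ) * (C * L) ^ (α i) * M ^ (α i + 1) / ((α i : ℝ) + 1) ^ 2) :=
      mul_le_mul_of_nonneg_left h1 (by positivity)
    refine h2.trans_eq ?_
    rw [show (∏ i, (C * (Nat.factorial (α i) : ℝ) * (C * L) ^ (α i) * M ^ (α i + 1)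
          / ((α i : ℝ) + 1) ^ 2))
        = (∏ _i : Fin s, C) * (∏ i, ((Nat.factorial (α i) : ℕ) : ℝ))
          * (∏ i, (C * L) ^ (α i)) * (∏ i, M ^ (α i + 1))
          * ∏ i, (1 : ℝ) / ((α i : ℝ) + 1) ^ 2 from ?_]
    · have e1 : (∏ _i : Fin s, C) = C ^ s := by
        rw [Finset.prod_const, Finset.card_univ, Fintype.card_fin]
      have e2 : (∏ i, (C * L) ^ (α i)) = (C * L) ^ m := by
        rw [Finset.prod_pow_eq_pow_sum, hαsum]
      have e3 : (∏ i, M ^ (α i + 1)) = M ^ (k + 1) := by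
        rw [Finset.prod_pow_eq_pow_sum, Finset.sum_add_distrib, hαsum,
          Finset.sum_const, Finset.card_univ, Fintype.card_fin, smul_eq_mul, mul_one, hms]
      rw [e1, e2, e3]
      rw [mul_pow]
      rw [← hms]
      field_simp
      ring
    · rw [Finset.prod_div_distrib, Finset.prod_mul_distrib, Finset.prod_mul_distrib,
        Finset.prod_mul_distrib]
      simp only [one_div, div_eq_mul_inv, one_mul, Finset.prod_mul_distrib,
        Finset.prod_inv_distrib, Finset.prod_const_one]
  have hcard : (Finset.univ : Finset (Fin s)).card = s := by
    rw [Finset.card_univ, Fintype.card_fin]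
  have hchem : ∑ α ∈ Finset.Nat.antidiagonalTuple s m, ∏ i, (1 : ℝ) / ((α i : ℝ) + 1) ^ 2
      ≤ 20 ^ s / ((m : ℝ) + 1) ^ 2 := by
    rw [← Finset.piAntidiag_univ_fin_eq_antidiagonalTuple m s]
    have := chemin (Finset.univ : Finset (Fin s)) m
    rwa [hcard] at this
  calc ∑ α ∈ Finset.Nat.antidiagonalTuple s m,
        ((Nat.factorial k : ℝ) / ∏ i, ((Nat.factorial (α i) : ℕ) : ℝ)) * ∏ i, a (α i)
      ≤ ∑ α ∈ Finset.Nat.antidiagonalTuple s m,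
          ((Nat.factorial k : ℝ) * C ^ (k + 1) * L ^ m * M ^ (k + 1))
            * ∏ i, (1 : ℝ) / ((α i : ℝ) + 1) ^ 2 := Finset.sum_le_sum per_tuple
    _ = ((Nat.factorial k : ℝ) * C ^ (k + 1) * L ^ m * M ^ (k + 1))
          * ∑ α ∈ Finset.Nat.antidiagonalTuple s m, ∏ i, (1 : ℝ) / ((α i : ℝ) + 1) ^ 2 := by
        rw [Finset.mul_sum]
    _ ≤ ((Nat.factorial k : ℝ) * C ^ (k + 1) * L ^ m * M ^ (k + 1))
          * (20 ^ s / ((m : ℝ) + 1) ^ 2) := by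
        apply mul_le_mul_of_nonneg_left hchem (by positivity)
    _ = C * ((Nat.factorial k : ℝ) * (C * L) ^ k * M ^ (k + 1) / ((k : ℝ) + 1) ^ 2)
          * (L ^ (1 - (s : ℤ)) * ((k : ℝ) + 1) ^ 2 * 20 ^ s / ((k + 2 - s : ℕ) : ℝ) ^ 2) := by
        have hk2s : ((k + 2 - s : ℕ) : ℝ) = (m : ℝ) + 1 := by
          have : k + 2 - s = m + 1 := by omega
          rw [this]; push_cast; ring
        have hzL : L ^ (1 - (s : ℤ)) = L ^ m / L ^ k := by
          rw [show (1 - (s : ℤ)) = (m : ℤ) - (k : ℤ) by omega,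
            zpow_sub₀ (ne_of_gt hL), zpow_natCast, zpow_natCast]
        rw [hk2s, hzL, mul_pow, show C ^ (k + 1) = C * C ^ k by rw [pow_succ]; ring]
        have hLk : L ^ k ≠ 0 := by positivity
        have hm1 : ((m : ℝ) + 1) ≠ 0 := by positivity
        have hk1 : ((k : ℝ) + 1) ≠ 0 := by positivity
        field_simp
end

section
/- Let k ≥ 1 and suppose ‖D^{j}u‖ ≤ C j!(CL)^j M^{j+1}/(j+1)² for all 0 ≤ j ≤ k-1, with M ≥ ‖y‖, |y - u| ≤ (C+1)M, and D^{k-r}y = 0 for 1 ≤ r ≤ k-1. Then Σ_{r=1}^{k-1} binom(k,r)‖D^{r-1}u‖·‖D^{k-r}(y-u)‖ + ‖D^{k-1}u‖·(C+1)M ≤ ((C+1)/(CL))·C·M^{k+1}(CL)^k·k!·Σ_{r=1}^{k}1/(r³(k-r+1)²). -/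
open scoped BigOperators

lemma key_ineq (C L M : ℝ) (hC : 1 ≤ C) (hL : 0 < L) (hM : 0 < M) (s t : ℕ) :
    ((s+t+1).choose (s+1) : ℝ) *
      (C * (Nat.factorial s : ℝ) * (C*L)^s * M^(s+1) / ((s:ℝ)+1)^2) *
      (C * (Nat.factorial t : ℝ) * (C*L)^t * M^(t+1) / ((t:ℝ)+1)^2)
    ≤ (C+1) * C * M^(s+t+2) * (C*L)^(s+t) * ((s+t+1).factorial : ℝ) /
        (((s:ℝ)+1)^3 * ((t:ℝ)+1)^2) := by
  have hch : ((s+t+1).choose (s+1) : ℝ) * (Nat.factorial s : ℝ) * (Nat.factorial t : ℝ) * ((s:ℝ)+1)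
      = ((s+t+1).factorial : ℝ) := by
    have h := Nat.choose_mul_factorial_mul_factorial (show s+1 ≤ s+t+1 by omega)
    have h2 : s+t+1 - (s+1) = t := by omega
    rw [h2] at h
    calc ((s+t+1).choose (s+1) : ℝ) * (Nat.factorial s : ℝ) * (Nat.factorial t : ℝ) * ((s:ℝ)+1)
        = (((s+t+1).choose (s+1) * (s+1).factorial * t.factorial : ℕ) : ℝ) := by
          push_cast [Nat.factorial_succ]; ring
      _ = _ := by rw [h]
  have hfac : (0:ℝ) ≤ ((s+t+1).choose (s+1) : ℝ) * (Nat.factorial s : ℝ) * (Nat.factorial t : ℝ)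
      * ((C*L)^(s+t) * M^(s+t+2)) / (((s:ℝ)+1)^2 * ((t:ℝ)+1)^2) := by positivity
  have h1 : ((s+t+1).choose (s+1) : ℝ) *
      (C * (Nat.factorial s : ℝ) * (C*L)^s * M^(s+1) / ((s:ℝ)+1)^2) *
      (C * (Nat.factorial t : ℝ) * (C*L)^t * M^(t+1) / ((t:ℝ)+1)^2)
      = (((s+t+1).choose (s+1) : ℝ) * (Nat.factorial s : ℝ) * (Nat.factorial t : ℝ)
        * ((C*L)^(s+t) * M^(s+t+2)) / (((s:ℝ)+1)^2 * ((t:ℝ)+1)^2)) * (C * C) := by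
    rw [pow_add, pow_add]; field_simp; ring
  have h2 : (C+1) * C * M^(s+t+2) * (C*L)^(s+t) * ((s+t+1).factorial : ℝ) /
        (((s:ℝ)+1)^3 * ((t:ℝ)+1)^2)
      = (((s+t+1).choose (s+1) : ℝ) * (Nat.factorial s : ℝ) * (Nat.factorial t : ℝ)
        * ((C*L)^(s+t) * M^(s+t+2)) / (((s:ℝ)+1)^2 * ((t:ℝ)+1)^2)) * ((C+1) * C) := by
    rw [← hch]; field_simp
  rw [h1, h2]
  have : C * C ≤ (C+1) * C := by nlinarith
  exact mul_le_mul_of_nonneg_left this hfac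


/-- Abstract estimate of the circulation term `K^k[u, y-u]`: with
`a_j = ‖D^j u‖` satisfying the inductive bound for `j ≤ k-1`, and
`b_j = ‖D^j(y-u)‖` with `b_{k-r} = a_{k-r}` for `1 ≤ r ≤ k-1` (since `D^{k-r}y = 0`)
and `b_0 ≤ (C+1)M` absorbed into the last term, one has
`Σ_{r=1}^{k-1} binom(k,r)·a_{r-1}·b_{k-r} + a_{k-1}·(C+1)M
  ≤ ((C+1)/(CL))·C·M^{k+1}(CL)^k·k!·Σ_{r=1}^{k} 1/(r³(k-r+1)²)`. -/
theorem circulation_term_estimate (k : ℕ) (hk : 1 ≤ k)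
    (C L M : ℝ) (hC : 1 ≤ C) (hL : 0 < L) (hM : 0 < M)
    (a b : ℕ → ℝ) (ha_nonneg : ∀ j, 0 ≤ a j) (hb_nonneg : ∀ j, 0 ≤ b j)
    (ha : ∀ j : ℕ, j ≤ k - 1 →
      a j ≤ C * (Nat.factorial j : ℝ) * (C * L) ^ j * M ^ (j + 1)
        / ((j : ℝ) + 1) ^ 2)
    (hb : ∀ r : ℕ, 1 ≤ r → r ≤ k - 1 → b (k - r) = a (k - r)) :
    (∑ r ∈ Finset.Icc 1 (k - 1), (k.choose r : ℝ) * a (r - 1) * b (k - r))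
      + a (k - 1) * ((C + 1) * M)
    ≤ ((C + 1) / (C * L)) * C * M ^ (k + 1) * (C * L) ^ k * (Nat.factorial k : ℝ)
        * ∑ r ∈ Finset.Icc 1 k, 1 / ((r : ℝ) ^ 3 * ((k - r + 1 : ℕ) : ℝ) ^ 2) := by
  have hCL : (0:ℝ) < C * L := by nlinarith
  have hRHS : ((C + 1) / (C * L)) * C * M ^ (k + 1) * (C * L) ^ k * (Nat.factorial k : ℝ)
      * ∑ r ∈ Finset.Icc 1 k, 1 / ((r : ℝ) ^ 3 * ((k - r + 1 : ℕ) : ℝ) ^ 2)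
      = ∑ r ∈ Finset.Icc 1 k,
          (C+1) * C * M^(k+1) * (C*L)^(k-1) * (k.factorial : ℝ)
            / ((r:ℝ)^3 * ((k - r + 1 : ℕ) : ℝ)^2) := by
    rw [Finset.mul_sum]
    refine Finset.sum_congr rfl fun r hr => ?_
    have hr' := Finset.mem_Icc.mp hr
    have hpow : (C*L)^k = (C*L)^(k-1) * (C*L) := by
      rw [← pow_succ]; congr 1; omega
    have hr3 : (0:ℝ) < (r:ℝ)^3 := by
      have : (0:ℝ) < (r:ℝ) := by exact_mod_cast hr'.1
      positivity
    have hden : (0:ℝ) < ((k - r + 1 : ℕ) : ℝ)^2 := by positivity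
    rw [hpow]; field_simp
  rw [hRHS]
  obtain ⟨m, rfl⟩ : ∃ m, k = m + 1 := ⟨k-1, by omega⟩
  rw [Finset.sum_Icc_succ_top (by omega : 1 ≤ m+1)]
  simp only [Nat.add_sub_cancel]
  apply add_le_add
  · apply Finset.sum_le_sum
    intro r hr
    have hr' := Finset.mem_Icc.mp hr
    obtain ⟨s, rfl⟩ : ∃ s, r = s + 1 := ⟨r - 1, by omega⟩
    obtain ⟨t, ht⟩ : ∃ t, m = s + 1 + t := ⟨m - (s+1), by omega⟩
    subst ht
    have hidx : s + 1 + t + 1 - (s + 1) = t + 1 := by omega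
    have hbe : b (t+1) = a (t+1) := by
      rw [← hidx]; exact hb (s+1) (by omega) (by omega)
    rw [hidx, hbe]
    have ha1 := ha s (by omega)
    have ha2 := ha (t+1) (by omega)
    have key := key_ineq C L M hC hL hM s (t+1)
    have hchoose : (s + 1 + t + 1).choose (s + 1) = (s + (t+1) + 1).choose (s+1) := by
      congr 1; omega
    calc ((s + 1 + t + 1).choose (s + 1) : ℝ) * a (s + 1 - 1) * a (t + 1)
        ≤ ((s + (t+1) + 1).choose (s + 1) : ℝ) *
            (C * (Nat.factorial s : ℝ) * (C*L)^s * M^(s+1) / ((s:ℝ)+1)^2) *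
            (C * (Nat.factorial (t+1) : ℝ) * (C*L)^(t+1) * M^(t+1+1) / (((t+1:ℕ):ℝ)+1)^2) := by
          rw [hchoose]
          simp only [Nat.add_sub_cancel]
          have hnn1 : (0:ℝ) ≤ ((s + (t+1) + 1).choose (s+1) : ℝ) := by positivity
          have hb1 : 0 ≤ C * (Nat.factorial s : ℝ) * (C*L)^s * M^(s+1) / ((s:ℝ)+1)^2 := by
            positivity
          apply mul_le_mul
          · exact mul_le_mul_of_nonneg_left ha1 hnn1
          · exact_mod_cast ha2
          · exact ha_nonneg _
          · exact mul_nonneg hnn1 hb1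
      _ ≤ (C+1) * C * M^(s+(t+1)+2) * (C*L)^(s+(t+1)) * ((s+(t+1)+1).factorial : ℝ) /
            (((s:ℝ)+1)^3 * (((t:ℕ):ℝ)+1+1)^2) := by
          have := key_ineq C L M hC hL hM s (t+1)
          push_cast at this ⊢
          convert this using 2 <;> push_cast <;> ring
      _ = (C+1) * C * M^(s+1+t+1+1) * (C*L)^(s+1+t) * ((s+1+t+1).factorial : ℝ) /
            (((s+1:ℕ):ℝ)^3 * ((t+1+1:ℕ):ℝ)^2) := by
          push_cast; ring
  · have hidx : m + 1 - (m + 1) + 1 = 1 := by omega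
    rw [hidx]
    have ha1 := ha m (by omega)
    have hbound : a m * ((C + 1) * M)
        ≤ (C * (Nat.factorial m : ℝ) * (C*L)^m * M^(m+1) / ((m:ℝ)+1)^2) * ((C+1)*M) := by
      apply mul_le_mul_of_nonneg_right ha1 (by positivity)
    refine hbound.trans (le_of_eq ?_)
    have hfac : ((m+1).factorial : ℝ) = ((m:ℝ)+1) * (Nat.factorial m : ℝ) := by
      push_cast [Nat.factorial_succ]; ring
    have hm1 : (0:ℝ) < (m:ℝ)+1 := by positivity
    rw [hfac]
    push_cast
    field_simp
    ring
end
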